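/- arXiv:1705.10923 — 3 statements merged into one kernel-verified Lean document; each statement's English description precedes it below -/
import Mathlib

section
/- Let T be a finite tree rooted at s, C a set of vertices with s ∉ C, and Y a minimal s–C separator of size at most k. Let I be a minimal s–C separator with |I| ≤ |Y| such that R(s,Y) ⊆ R(s,I). For each x ∈ I define S_x = { y ∈ Y : y lies on the unique s–x path }. Then Y ⊆ ⋃_{x∈I} S_x, each |S_x| ≤ 1, the S_x are pairwise disjoint, and |S_x| = 1 for every x ∈ I. -/
/-! Each `y ∈ Y` is, by minimality, the only vertex of `Y` on some `s`–`C` path, and that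
path meets `I`; its prefix up to a vertex `x ∈ I` must meet `Y` (otherwise `x` would lie in
`R(s, Y) ⊆ R(s, I)`), so `y ∈ S_x`. The same argument on the unique `s`–`x` path shows that
every `S_x` is nonempty. Since `Y` meets the `s`–`y` path only at `y`, two vertices of `Y`
cannot lie on one root path, so `|S_x| ≤ 1`. Hence `x ↦ S_x` maps `I` onto `Y`, and
`|I| ≤ |Y|` makes it injective. -/

/-- Reachability in `G − S`. -/
def reachAvoid {V : Type*} (G : SimpleGraph V) (S : Set V) : V → V → Prop :=
  Relation.ReflTransGen (fun u v => G.Adj u v ∧ u ∉ S ∧ v ∉ S)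

/-- The set of vertices reachable from `s` in `G − S`. -/
def reachSetFrom {V : Type*} (G : SimpleGraph V) (s : V) (S : Set V) : Set V :=
  {v | reachAvoid G S s v}

/-- `S` is an `s`–`C` separator. -/
def IsSCSeparator {V : Type*} (G : SimpleGraph V) (s : V) (C : Set V) (S : Set V) : Prop :=
  S ⊆ ({s} ∪ C)ᶜ ∧ ∀ c ∈ C, ¬ reachAvoid G S s c

theorem Set.pairwiseDisjoint_of_subset_biUnion_of_ncard_eq_one {ι α : Type*} [Finite ι]
    {I : Set ι} {Y : Set α} {S : ι → Set α} (hY : Y ⊆ ⋃ i ∈ I, S i)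
    (hS : ∀ i ∈ I, (S i).ncard = 1) (hIY : I.ncard ≤ Y.ncard) : I.PairwiseDisjoint S := by
  intro i hi j hj hij
  have : Nonempty α := ⟨(Set.ncard_eq_one.1 (hS i hi)).choose⟩
  choose! g hg using fun i hi => Set.ncard_eq_one.1 (hS i hi)
  have hYg : Y ⊆ g '' I := by
    intro y hy
    obtain ⟨i, hi, hyi⟩ := Set.mem_iUnion₂.1 (hY hy)
    exact ⟨i, hi, (Set.mem_singleton_iff.1 (hg i hi ▸ hyi)).symm⟩
  have hinj : Set.InjOn g I :=
    (Set.ncard_image_iff I.toFinite).1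
      (le_antisymm Set.ncard_image_le (hIY.trans (Set.ncard_le_ncard hYg)))
  simpa [Function.onFun, hg i hi, hg j hj] using fun h => hij (hinj hi hj h)

theorem SimpleGraph.Walk.mem_support_takeUntil_or {V : Type*} [DecidableEq V] {G : SimpleGraph V}
    {u v a b : V} (p : G.Walk u v) (ha : a ∈ p.support) (hb : b ∈ p.support) :
    a ∈ (p.takeUntil b hb).support ∨ b ∈ (p.takeUntil a ha).support := by
  rcases List.prefix_or_prefix_of_prefix (p.support_takeUntil_prefix_support ha)
      (p.support_takeUntil_prefix_support hb) with h | h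
  · exact .inl (h.subset (p.takeUntil a ha).end_mem_support)
  · exact .inr (h.subset (p.takeUntil b hb).end_mem_support)

section Separators

variable {V : Type*} {G : SimpleGraph V} {s x : V} {C Y I : Set V}

theorem reachAvoid_of_walk {S : Set V} {u v : V} (p : G.Walk u v)
    (hp : ∀ w ∈ p.support, w ∉ S) : reachAvoid G S u v := by
  induction p with
  | nil => exact .refl
  | cons h p ih =>
    exact .head ⟨h, hp _ (by simp), hp _ (by simp)⟩ (ih fun w hw => hp w (by simp [hw]))

theorem exists_isPath_of_reachAvoid {S : Set V} {u v : V} (h : reachAvoid G S u v)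
    (hu : u ∉ S) : ∃ p : G.Walk u v, p.IsPath ∧ ∀ w ∈ p.support, w ∉ S := by
  classical
  suffices ∃ p : G.Walk u v, ∀ w ∈ p.support, w ∉ S by
    obtain ⟨p, hp⟩ := this
    exact ⟨p.bypass, p.bypass_isPath, fun w hw => hp w (p.support_bypass_subset_support hw)⟩
  induction h with
  | refl => exact ⟨.nil, by simpa using hu⟩
  | tail _ hbc ih =>
    obtain ⟨p, hp⟩ := ih
    refine ⟨p.concat hbc.1, fun w hw => ?_⟩
    rcases (by simpa using hw : w ∈ p.support ∨ w = _) with hw | rfl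
    · exact hp w hw
    · exact hbc.2.2

theorem eq_of_reachAvoid_of_mem {S : Set V} {u v : V} (h : reachAvoid G S u v) (hv : v ∈ S) :
    v = u := by
  rcases h.cases_tail with rfl | ⟨_, _, hb⟩
  · rfl
  · exact absurd hv hb.2.2

theorem exists_mem_support_of_reachSetFrom_subset
    (hcov : reachSetFrom G s Y ⊆ reachSetFrom G s I) (hs : s ∉ I) (hx : x ∈ I)
    (p : G.Walk s x) : ∃ w ∈ p.support, w ∈ Y := by
  by_contra! h
  have hreach : reachAvoid G I s x := hcov (reachAvoid_of_walk p h)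
  exact hs (eq_of_reachAvoid_of_mem hreach hx ▸ hx)

namespace IsSCSeparator

theorem start_notMem (hY : IsSCSeparator G s C Y) : s ∉ Y :=
  fun h => hY.1 h (Or.inl rfl)

theorem exists_mem_support (hY : IsSCSeparator G s C Y) {c : V} (hc : c ∈ C)
    (p : G.Walk s c) : ∃ w ∈ p.support, w ∈ Y := by
  by_contra! h
  exact hY.2 c hc (reachAvoid_of_walk p h)

theorem exists_isPath_support_inter_eq_singleton (hY : IsSCSeparator G s C Y)
    (hmin : ∀ Y' ⊂ Y, ¬ IsSCSeparator G s C Y') {y : V} (hy : y ∈ Y) :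
    ∃ c ∈ C, ∃ p : G.Walk s c, p.IsPath ∧ y ∈ p.support ∧ ∀ w ∈ p.support, w ∈ Y → w = y := by
  obtain ⟨c, hc, hreach⟩ : ∃ c ∈ C, reachAvoid G (Y \ {y}) s c := by
    have := hmin _ (Set.sdiff_singleton_ssubset.2 hy)
    rw [IsSCSeparator, not_and] at this
    push Not at this
    exact this (Set.sdiff_subset.trans hY.1)
  obtain ⟨p, hp, havoid⟩ := exists_isPath_of_reachAvoid hreach fun h => hY.start_notMem h.1
  have honly : ∀ w ∈ p.support, w ∈ Y → w = y :=
    fun w hw hwY => by_contra fun hne => havoid w hw ⟨hwY, hne⟩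
  obtain ⟨w, hw, hwY⟩ := hY.exists_mem_support hc p
  exact ⟨c, hc, p, hp, honly w hw hwY ▸ hw, honly⟩

theorem eq_of_mem_support_of_isPath (hG : G.IsAcyclic) (hY : IsSCSeparator G s C Y)
    (hmin : ∀ Y' ⊂ Y, ¬ IsSCSeparator G s C Y') {y z : V} (hy : y ∈ Y) (p : G.Walk s y)
    (hp : p.IsPath) (hz : z ∈ p.support) (hzY : z ∈ Y) : z = y := by
  classical
  obtain ⟨c, -, q, hq, hyq, honly⟩ := hY.exists_isPath_support_inter_eq_singleton hmin hy
  obtain rfl : p = q.takeUntil y hyq :=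
    congrArg Subtype.val ((hG.subsingleton_path s y).elim ⟨p, hp⟩ ⟨_, hq.takeUntil hyq⟩)
  exact honly z (q.support_takeUntil_subset_support hyq hz) hzY

end IsSCSeparator

def pathTrace (G : SimpleGraph V) (s : V) (Y : Set V) (x : V) : Set V :=
  {y ∈ Y | ∃ p : G.Walk s x, p.IsPath ∧ y ∈ p.support}

theorem pathTrace_subsingleton (hG : G.IsAcyclic) (hY : IsSCSeparator G s C Y)
    (hmin : ∀ Y' ⊂ Y, ¬ IsSCSeparator G s C Y') (x : V) : (pathTrace G s Y x).Subsingleton := by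
  classical
  rintro y₁ ⟨hy₁, p, hp, hy₁p⟩ y₂ ⟨hy₂, p', hp', hy₂p⟩
  obtain rfl : p = p' := congrArg Subtype.val ((hG.subsingleton_path s x).elim ⟨p, hp⟩ ⟨p', hp'⟩)
  rcases p.mem_support_takeUntil_or hy₁p hy₂p with h | h
  · exact hY.eq_of_mem_support_of_isPath hG hmin hy₂ _ (hp.takeUntil hy₂p) h hy₁
  · exact (hY.eq_of_mem_support_of_isPath hG hmin hy₁ _ (hp.takeUntil hy₁p) h hy₂).symm

theorem pathTrace_nonempty (hG : G.Connected) (hs : s ∉ I)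
    (hcov : reachSetFrom G s Y ⊆ reachSetFrom G s I) (hx : x ∈ I) :
    (pathTrace G s Y x).Nonempty := by
  classical
  obtain ⟨p⟩ := hG.preconnected s x
  obtain ⟨y, hy, hyY⟩ := exists_mem_support_of_reachSetFrom_subset hcov hs hx p.bypass
  exact ⟨y, hyY, p.bypass, p.bypass_isPath, hy⟩

theorem subset_biUnion_pathTrace (hY : IsSCSeparator G s C Y)
    (hmin : ∀ Y' ⊂ Y, ¬ IsSCSeparator G s C Y') (hI : IsSCSeparator G s C I)
    (hcov : reachSetFrom G s Y ⊆ reachSetFrom G s I) : Y ⊆ ⋃ x ∈ I, pathTrace G s Y x := by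
  classical
  intro y hy
  obtain ⟨c, hc, p, hp, -, honly⟩ := hY.exists_isPath_support_inter_eq_singleton hmin hy
  obtain ⟨x, hxp, hxI⟩ := hI.exists_mem_support hc p
  obtain ⟨w, hw, hwY⟩ :=
    exists_mem_support_of_reachSetFrom_subset hcov hI.start_notMem hxI (p.takeUntil x hxp)
  obtain rfl := honly w (p.support_takeUntil_subset_support hxp hw) hwY
  exact Set.mem_biUnion hxI ⟨hy, _, hp.takeUntil hxp, hw⟩

end Separators

theorem stmt_7_general {V : Type*} [Fintype V] (T : SimpleGraph V) (hT : T.IsTree)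
    (s : V) (C : Set V) (Y I : Set V)
    (hY : IsSCSeparator T s C Y)
    (hYmin : ∀ Y' ⊂ Y, ¬ IsSCSeparator T s C Y')
    (hI : IsSCSeparator T s C I)
    (hIY : I.ncard ≤ Y.ncard)
    (hcov : reachSetFrom T s Y ⊆ reachSetFrom T s I)
    (S : V → Set V)
    (hSdef : ∀ x, S x = {y ∈ Y | ∃ p : T.Walk s x, p.IsPath ∧ y ∈ p.support}) :
    (Y ⊆ ⋃ x ∈ I, S x) ∧
    (∀ x ∈ I, (S x).ncard ≤ 1) ∧
    (I.Pairwise fun x u => Disjoint (S x) (S u)) ∧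
    (∀ x ∈ I, (S x).ncard = 1) := by
  obtain rfl : S = pathTrace T s Y := funext hSdef
  have hone : ∀ x ∈ I, (pathTrace T s Y x).ncard = 1 := fun x hx => by
    obtain ⟨y, hy⟩ := pathTrace_nonempty hT.connected hI.start_notMem hcov hx
    exact Set.ncard_eq_one.2
      ⟨y, (pathTrace_subsingleton hT.isAcyclic hY hYmin x).eq_singleton_of_mem hy⟩
  have hcover := subset_biUnion_pathTrace hY hYmin hI hcov
  exact ⟨hcover, fun x hx => (hone x hx).le,
    Set.pairwiseDisjoint_of_subset_biUnion_of_ncard_eq_one hcover hone hIY, hone⟩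

theorem stmt_7 {V : Type*} [Fintype V] (T : SimpleGraph V) (hT : T.IsTree)
    (s : V) (C : Set V) (hsC : s ∉ C) (k : ℕ) (Y I : Set V)
    (hY : IsSCSeparator T s C Y)
    (hYmin : ∀ Y' ⊂ Y, ¬ IsSCSeparator T s C Y')
    (hYk : Y.ncard ≤ k)
    (hI : IsSCSeparator T s C I)
    (hImin : ∀ I' ⊂ I, ¬ IsSCSeparator T s C I')
    (hIY : I.ncard ≤ Y.ncard)
    (hcov : reachSetFrom T s Y ⊆ reachSetFrom T s I)
    (S : V → Set V)
    (hSdef : ∀ x, S x = {y ∈ Y | ∃ p : T.Walk s x, p.IsPath ∧ y ∈ p.support}) :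
    (Y ⊆ ⋃ x ∈ I, S x) ∧
    (∀ x ∈ I, (S x).ncard ≤ 1) ∧
    (I.Pairwise fun x u => Disjoint (S x) (S u)) ∧
    (∀ x ∈ I, (S x).ncard = 1) :=
  stmt_7_general T hT s C Y I hY hYmin hI hIY hcov S hSdef
end

section
/- Let G be a graph, s a vertex, C a vertex set avoiding s, and suppose there exists a sequence S₁, …, S_q of pairwise disjoint minimal s–C separators, each of size at most k, with q > k, such that every vertex of S_q is at graph distance greater than k from s. Then placing firefighters on the vertices of S_q, one per odd time step in arbitrary order, is a valid k-step strategy (no vertex of S_q burns before the firefighter is placed there) that saves C. -/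
/-- The set of vertices burning at time `2 t` (after `t` spreading rounds), when fire
breaks out at `s` at time `0` and, for `i < k`, a firefighter is placed on `h i` at the
odd time step `2 i + 1` (a protected vertex never burns). -/
def burned {V : Type*} (G : SimpleGraph V) (s : V) (k : ℕ) (h : ℕ → V) : ℕ → Set V
  | 0 => {s}
  | t + 1 => burned G s k h t ∪
      {v | (∀ j, j ≤ t → j < k → h j ≠ v) ∧ ∃ u ∈ burned G s k h t, G.Adj u v}

/-- A `k`-step strategy is valid if each firefighter is placed on a vertex that is not
burning at the time of placement. -/
def validStrategy {V : Type*} (G : SimpleGraph V) (s : V) (k : ℕ) (h : ℕ → V) : Prop :=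
  ∀ i < k, h i ∉ burned G s k h i

/-- A strategy saves `C` if the protected vertices form an `s`–`C` separator. -/
def savesSet {V : Type*} (G : SimpleGraph V) (s : V) (k : ℕ) (h : ℕ → V) (C : Set V) : Prop :=
  ∀ c ∈ C, ¬ reachAvoid G {v | ∃ i < k, h i = v} s c


lemma burned_walk {V : Type*} (G : SimpleGraph V) (s : V) (k : ℕ) (h : ℕ → V) :
    ∀ t, ∀ v ∈ burned G s k h t, ∃ p : G.Walk s v, p.length ≤ t := by
  intro t
  induction t with
  | zero => rintro v rfl; exact ⟨SimpleGraph.Walk.nil, le_refl 0⟩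
  | succ t ih =>
      rintro v (hv | ⟨-, u, hu, hadj⟩)
      · obtain ⟨p, hp⟩ := ih v hv
        exact ⟨p, hp.trans (Nat.le_succ t)⟩
      · obtain ⟨p, hp⟩ := ih u hu
        refine ⟨p.concat hadj, ?_⟩
        rw [SimpleGraph.Walk.length_concat]
        omega

theorem stmt_13 {V : Type*} [Fintype V] (G : SimpleGraph V) (s : V) (C : Set V)
    (hsC : s ∉ C) (k q : ℕ) (S : ℕ → Set V)
    (hsep : ∀ i, 1 ≤ i → i ≤ q → IsSCSeparator G s C (S i))
    (hmin : ∀ i, 1 ≤ i → i ≤ q → ∀ S' ⊂ S i, ¬ IsSCSeparator G s C S')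
    (hsize : ∀ i, 1 ≤ i → i ≤ q → (S i).ncard ≤ k)
    (hdisj : ∀ i j, 1 ≤ i → i ≤ q → 1 ≤ j → j ≤ q → i ≠ j → Disjoint (S i) (S j))
    (hq : k < q)
    (hfar : ∀ v ∈ S q, ∀ p : G.Walk s v, k < p.length) :
    ∀ h : ℕ → V, h '' Set.Iio k = S q →
      validStrategy G s k h ∧ savesSet G s k h C := by
  intro h hS
  have hmem : ∀ i < k, h i ∈ S q := by
    intro i hi
    rw [← hS]
    exact ⟨i, hi, rfl⟩
  constructor
  · intro i hi hb
    obtain ⟨p, hp⟩ := burned_walk G s k h i (h i) hb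
    exact absurd (hfar _ (hmem i hi) p) (by omega)
  · have : {v | ∃ i < k, h i = v} = S q := by
      rw [← hS]; ext v; simp [Set.mem_image]
    rw [savesSet, this]
    exact (hsep q (by omega) le_rfl).2
end

section
/- Let G be obtained from a graph H by adding k+1 internally vertex-disjoint paths of length ℓ+1 from a source s⋆ to a vertex v. Then in any k-step firefighting strategy on G, the vertex v burns by time step 2(ℓ+1) (firefighters cannot block all k+1 disjoint paths with only k placements). -/
theorem walk_getVert_injOn {V : Type*} {G : SimpleGraph V} {u w : V} {p : G.Walk u w}
    (hp : p.IsPath) : ∀ m ≤ p.length, ∀ n ≤ p.length, p.getVert m = p.getVert n → m = n := by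
  induction p with
  | nil => intro m hm n hn _; simp only [SimpleGraph.Walk.length_nil, Nat.le_zero] at hm hn; omega
  | cons h q ih =>
    rw [SimpleGraph.Walk.cons_isPath_iff] at hp
    intro m hm n hn heq
    match m, n with
    | 0, 0 => rfl
    | 0, n+1 =>
      exfalso
      apply hp.2
      rw [SimpleGraph.Walk.mem_support_iff_exists_getVert]
      exact ⟨n, heq.symm, by simpa using hn⟩
    | m+1, 0 =>
      exfalso
      apply hp.2
      rw [SimpleGraph.Walk.mem_support_iff_exists_getVert]
      exact ⟨m, heq, by simpa using hm⟩
    | m+1, n+1 =>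
      have := ih hp.1 m (by simpa using hm) n (by simpa using hn) heq
      omega

/-- If `G` contains `k+1` internally vertex-disjoint paths of length `ℓ+1` from the
source `s⋆` to `v`, then in any valid `k`-step strategy that never places a firefighter
on `v` itself, the vertex `v` burns by time step `2(ℓ+1)`. -/
theorem stmt_15 {V : Type*} (G : SimpleGraph V) (s v : V) (hsv : s ≠ v) (k ℓ : ℕ)
    (P : Fin (k + 1) → G.Walk s v)
    (hpath : ∀ i, (P i).IsPath)
    (hlen : ∀ i, (P i).length = ℓ + 1)
    (hdisj : ∀ i j, i ≠ j → ∀ x, x ∈ (P i).support → x ∈ (P j).support → x = s ∨ x = v)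
    (h : ℕ → V) (hvalid : validStrategy G s k h) (hnv : ∀ i < k, h i ≠ v) :
    v ∈ burned G s k h (ℓ + 1) := by
  -- pigeonhole: some path has no firefighter on its internal vertices
  have hfree : ∃ i : Fin (k+1), ∀ j < k, h j ∈ (P i).support → h j = s ∨ h j = v := by
    by_contra hc
    push_neg at hc
    choose f hf1 hf2 hf3 hf4 using hc
    have hinj : Function.Injective f := by
      intro i₁ i₂ he
      by_contra hne
      rcases hdisj i₁ i₂ hne (h (f i₁)) (hf2 i₁) (he ▸ hf2 i₂) with h' | h'
      · exact hf3 i₁ h'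
      · exact hf4 i₁ h'
    have : Fintype.card (Fin (k+1)) ≤ Fintype.card (Fin k) := by
      have : Function.Injective (fun i => (⟨f i, hf1 i⟩ : Fin k)) := by
        intro a b hab
        exact hinj (by simpa using congrArg Fin.val hab)
      exact Fintype.card_le_of_injective _ this
    simp at this
  obtain ⟨i, hi⟩ := hfree
  -- internal vertices of P i are not s and not v
  have hgetne : ∀ t, 1 ≤ t → t ≤ ℓ → (P i).getVert t ≠ s ∧ (P i).getVert t ≠ v := by
    intro t h1 h2
    constructor
    · intro he
      have : t = 0 := walk_getVert_injOn (hpath i) t (by rw [hlen]; omega) 0 (by omega)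
        (by rw [he, (P i).getVert_zero])
      omega
    · intro he
      have : t = (P i).length := walk_getVert_injOn (hpath i) t (by rw [hlen]; omega)
        (P i).length le_rfl (by rw [he, (P i).getVert_length])
      rw [hlen] at this; omega
  -- induction along the path
  have key : ∀ t ≤ ℓ + 1, (P i).getVert t ∈ burned G s k h t := by
    intro t
    induction t with
    | zero => intro _; rw [(P i).getVert_zero]; exact rfl
    | succ t ih =>
      intro ht
      right
      refine ⟨?_, (P i).getVert t, ih (by omega), (P i).adj_getVert_succ (by rw [hlen]; omega)⟩
      intro j _ hjk he
      rcases Nat.lt_or_ge (t+1) (ℓ+1) with hlt | hge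
      · have hmem : h j ∈ (P i).support := by
          rw [SimpleGraph.Walk.mem_support_iff_exists_getVert]
          exact ⟨t+1, he.symm, by rw [hlen]; omega⟩
        rcases hi j hjk hmem with h' | h'
        · exact (hgetne (t+1) (by omega) (by omega)).1 (he ▸ h')
        · exact (hgetne (t+1) (by omega) (by omega)).2 (he ▸ h')
      · have : t + 1 = (P i).length := by rw [hlen]; omega
        rw [this, (P i).getVert_length] at he
        exact hnv j hjk he
  have := key (ℓ+1) le_rfl
  have hv : (P i).getVert (ℓ+1) = v := by rw [← hlen i]; exact (P i).getVert_length
  rwa [hv] at this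
end
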